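/- Let G be a finite simple graph with n vertices and |E| edges, and G^(m) the m-th iterated corona graph of G with itself. Then the number of edges of G^(m) equals |E| + (|E| + n)((n+1)^m − 1). -/

import Mathlib

open SimpleGraph Filter

/-- The corona product `H ∘ G`: one copy of `H` and, for each vertex `a` of `H`,
a copy of `G` whose vertices are all joined to `a`. -/
def corona {α β : Type*} (H : SimpleGraph α) (G : SimpleGraph β) :
    SimpleGraph (α ⊕ α × β) where
  Adj x y :=
    match x, y with
    | Sum.inl a, Sum.inl a' => H.Adj a a'
    | Sum.inl a, Sum.inr p => a = p.1
    | Sum.inr p, Sum.inl a => a = p.1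
    | Sum.inr p, Sum.inr q => p.1 = q.1 ∧ G.Adj p.2 q.2
  symm := by
    refine ⟨?_⟩
    rintro (a | p) (a' | q) h
    · exact h.symm
    · exact h
    · exact h
    · exact ⟨h.1.symm, h.2.symm⟩
  loopless := by
    refine ⟨?_⟩
    rintro (a | p) h
    · exact H.irrefl h
    · exact G.irrefl h.2

instance coronaAdjDecidable {α β : Type*} [DecidableEq α]
    (H : SimpleGraph α) (G : SimpleGraph β)
    [DecidableRel H.Adj] [DecidableRel G.Adj] : DecidableRel (corona H G).Adj := fun x y =>
  match x, y with
  | Sum.inl a, Sum.inl a' => inferInstanceAs (Decidable (H.Adj a a'))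
  | Sum.inl a, Sum.inr p => inferInstanceAs (Decidable (a = p.1))
  | Sum.inr p, Sum.inl a => inferInstanceAs (Decidable (a = p.1))
  | Sum.inr p, Sum.inr q => inferInstanceAs (Decidable (p.1 = q.1 ∧ G.Adj p.2 q.2))

/-- Vertex type of the `m`-th iterated corona graph generated by a seed on `V`. -/
def coronaVert (V : Type*) : ℕ → Type _
  | 0 => V
  | m + 1 => coronaVert V m ⊕ coronaVert V m × V

/-- The iterated Corona graphs: `G^(0) = G`, `G^(m+1) = G^(m) ∘ G`. -/
def coronaIter {V : Type*} (G : SimpleGraph V) : (m : ℕ) → SimpleGraph (coronaVert V m)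
  | 0 => G
  | m + 1 => corona (coronaIter G m) G

instance coronaVertFintype {V : Type*} [Fintype V] : (m : ℕ) → Fintype (coronaVert V m)
  | 0 => inferInstanceAs (Fintype V)
  | m + 1 =>
    have := coronaVertFintype (V := V) m
    inferInstanceAs (Fintype (coronaVert V m ⊕ coronaVert V m × V))

instance coronaVertDecEq {V : Type*} [DecidableEq V] : (m : ℕ) → DecidableEq (coronaVert V m)
  | 0 => inferInstanceAs (DecidableEq V)
  | m + 1 =>
    have := coronaVertDecEq (V := V) m
    inferInstanceAs (DecidableEq (coronaVert V m ⊕ coronaVert V m × V))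

instance coronaIterAdjDecidable {V : Type*} [DecidableEq V] (G : SimpleGraph V)
    [DecidableRel G.Adj] : (m : ℕ) → DecidableRel (coronaIter G m).Adj
  | 0 => inferInstanceAs (DecidableRel G.Adj)
  | m + 1 =>
    have := coronaIterAdjDecidable G m
    inferInstanceAs (DecidableRel (corona (coronaIter G m) G).Adj)

section Aux

variable {α β : Type*} [Fintype α] [Fintype β] [DecidableEq α] [DecidableEq β]
  (H : SimpleGraph α) (G : SimpleGraph β) [DecidableRel H.Adj] [DecidableRel G.Adj]

/-- Neighbors of `inl a` in the corona. -/
def coronaNeighborInlEquiv (a : α) :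
    (corona H G).neighborSet (Sum.inl a) ≃ (H.neighborSet a ⊕ β) where
  toFun x :=
    match x with
    | ⟨Sum.inl a', h⟩ => Sum.inl ⟨a', h⟩
    | ⟨Sum.inr p, _⟩ => Sum.inr p.2
  invFun x :=
    match x with
    | Sum.inl ⟨a', h⟩ => ⟨Sum.inl a', h⟩
    | Sum.inr b => ⟨Sum.inr (a, b), rfl⟩
  left_inv := by
    rintro ⟨(a' | p), h⟩
    · rfl
    · exact Subtype.ext (by simp only; rw [show a = p.1 from h])
  right_inv := by rintro (⟨a', h⟩ | b) <;> rfl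

def coronaNeighborInrEquiv (p : α × β) :
    (corona H G).neighborSet (Sum.inr p) ≃ (Unit ⊕ G.neighborSet p.2) where
  toFun x :=
    match x with
    | ⟨Sum.inl _, _⟩ => Sum.inl ()
    | ⟨Sum.inr q, h⟩ => Sum.inr ⟨q.2, h.2⟩
  invFun x :=
    match x with
    | Sum.inl _ => ⟨Sum.inl p.1, rfl⟩
    | Sum.inr ⟨b, h⟩ => ⟨Sum.inr (p.1, b), ⟨rfl, h⟩⟩
  left_inv := by
    rintro ⟨(a | q), h⟩
    · exact Subtype.ext (by simp only; rw [show a = p.1 from h])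
    · exact Subtype.ext (by simp only; rw [show p.1 = q.1 from h.1])
  right_inv := by rintro (⟨⟩ | ⟨b, h⟩) <;> rfl

lemma corona_degree_inl (a : α) :
    (corona H G).degree (Sum.inl a) = H.degree a + Fintype.card β := by
  rw [← card_neighborSet_eq_degree, ← card_neighborSet_eq_degree,
    Fintype.card_congr (coronaNeighborInlEquiv H G a), Fintype.card_sum]

lemma corona_degree_inr (p : α × β) :
    (corona H G).degree (Sum.inr p) = 1 + G.degree p.2 := by
  rw [← card_neighborSet_eq_degree, ← card_neighborSet_eq_degree,
    Fintype.card_congr (coronaNeighborInrEquiv H G p), Fintype.card_sum,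
    Fintype.card_unit]

lemma corona_card_edgeFinset :
    (corona H G).edgeFinset.card =
      H.edgeFinset.card + Fintype.card α * (G.edgeFinset.card + Fintype.card β) := by
  have h := SimpleGraph.sum_degrees_eq_twice_card_edges (corona H G)
  rw [Fintype.sum_sum_type] at h
  simp only [corona_degree_inl, corona_degree_inr, Fintype.sum_prod_type] at h
  rw [Finset.sum_add_distrib, Finset.sum_const, Finset.card_univ,
    SimpleGraph.sum_degrees_eq_twice_card_edges] at h
  have h2 : ∀ a : α, ∑ b : β, (1 + G.degree b) = Fintype.card β + 2 * G.edgeFinset.card := by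
    intro a
    rw [Finset.sum_add_distrib, Finset.sum_const, Finset.card_univ, smul_eq_mul, mul_one,
      SimpleGraph.sum_degrees_eq_twice_card_edges]
  rw [Finset.sum_congr rfl (fun a _ => h2 a), Finset.sum_const, Finset.card_univ,
    smul_eq_mul, smul_eq_mul] at h
  apply Nat.eq_of_mul_eq_mul_left (show 0 < 2 by norm_num)
  rw [← h]
  ring

end Aux

lemma coronaVert_card {V : Type*} [Fintype V] (n : ℕ) (hn : Fintype.card V = n) :
    ∀ m : ℕ, Fintype.card (coronaVert V m) = n * (n + 1) ^ m
  | 0 => by rw [pow_zero, mul_one]; exact hn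
  | m + 1 => by
    have ih := coronaVert_card n hn m
    show Fintype.card (coronaVert V m ⊕ coronaVert V m × V) = _
    rw [Fintype.card_sum, Fintype.card_prod, ih, hn]
    ring

/-- the number of edges of `G^(m)` equals `|E| + (|E|+n)((n+1)^m - 1)`. -/
theorem corona_card_edges {V : Type*} [Fintype V] [DecidableEq V] (G : SimpleGraph V)
    [DecidableRel G.Adj] (n E : ℕ) (hn : Fintype.card V = n)
    (hE : G.edgeFinset.card = E) (m : ℕ) :
    (coronaIter G m).edgeFinset.card = E + (E + n) * ((n + 1) ^ m - 1) := by
  induction m with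
  | zero => rw [pow_zero, Nat.sub_self, mul_zero, add_zero]; exact hE
  | succ m ih =>
    show (corona (coronaIter G m) G).edgeFinset.card = _
    rw [corona_card_edgeFinset, ih, coronaVert_card n hn m, hE, hn]
    obtain ⟨j, hj⟩ := Nat.exists_eq_add_of_le (Nat.one_le_pow m (n + 1) (Nat.succ_pos n))
    rw [pow_succ, hj]
    have h1 : 1 + j - 1 = j := by omega
    have h2 : (1 + j) * (n + 1) - 1 = n + n * j + j := by
      have : (1 + j) * (n + 1) = n + n * j + j + 1 := by ring
      omega
    rw [h1, h2]
    ring
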